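/- Let Ω ⊂ ℝ³ be open bounded of width d, u ∈ H² ∩ L^∞(Ω) with ‖Δu‖_{L^∞} ≤ K, and d_n, c_n > 0 constants. Define L : H¹₀(Ω) → H⁻¹(Ω) by ⟨Lσ, φ⟩ = ∫_Ω (d_n ∇σ − c_n σ ∇u)·∇φ dx. Then for all σ ∈ H¹₀(Ω), ⟨Lσ, σ⟩ ≥ (d_n − (c_n/2)(d²/2)K) ‖∇σ‖²_{L²}. In particular, if d² < 4 d_n/(c_n K) then L is coercive. -/

import Mathlib

open MeasureTheory
open scoped RealInnerProductSpace

/-- Smooth functions compactly supported in `Ω`, representing `H¹₀(Ω)`. -/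
def TestFun (Ω : Set (EuclideanSpace ℝ (Fin 3))) (φ : EuclideanSpace ℝ (Fin 3) → ℝ) : Prop :=
  ContDiff ℝ (⊤ : ℕ∞) φ ∧ HasCompactSupport φ ∧ tsupport φ ⊆ Ω

section helpers

variable {F : Type*} [NormedAddCommGroup F] [InnerProductSpace ℝ F] [CompleteSpace F]

private theorem gradient_sq' (f : F → ℝ) (x : F) (hf : DifferentiableAt ℝ f x) :
    gradient (fun y => f y ^ 2) x = (2 * f x) • gradient f x := by
  have H : HasFDerivAt (fun y => f y ^ 2) ((2 * f x) • fderiv ℝ f x) x := by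
    have h2 := hf.hasFDerivAt.mul hf.hasFDerivAt
    have e1 : (fun y => f y ^ 2) = fun y => f y * f y := by ext y; ring
    have e2 : (2 * f x) • fderiv ℝ f x
        = f x • fderiv ℝ f x + f x • fderiv ℝ f x := by rw [two_mul, add_smul]
    rw [e1, e2]; exact h2
  rw [gradient, gradient, H.fderiv, LinearIsometryEquiv.map_smul]

private theorem grad_cont' (f : F → ℝ) (hf : ContDiff ℝ (⊤ : ℕ∞) f) : Continuous (gradient f) := by
  have : Continuous (fderiv ℝ f) := hf.continuous_fderiv (by simp)
  exact (InnerProductSpace.toDual ℝ F).symm.continuous.comp this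

private theorem grad_cpt' (f : F → ℝ) (hf : HasCompactSupport f) :
    HasCompactSupport (gradient f) := by
  have h := hf.fderiv (𝕜 := ℝ)
  exact h.comp_left (g := (InnerProductSpace.toDual ℝ F).symm) (map_zero _)

end helpers

/-- Coercivity of the drift-diffusion operator `Lσ = −∇·(d_n∇σ − c_n σ∇u)` on a
domain of width `d`: `⟨Lσ,σ⟩ ≥ (d_n − (c_n/2)(d²/2)K)‖∇σ‖²_{L²}`, where
`‖Δu‖_{L^∞} ≤ K`; in particular `L` is coercive when `d² < 4 d_n/(c_n K)`. -/
theorem stmt5 (Ω : Set (EuclideanSpace ℝ (Fin 3))) (hΩo : IsOpen Ω)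
    (hΩb : Bornology.IsBounded Ω) (d dn cn K : ℝ) (hdn : 0 < dn) (hcn : 0 < cn)
    (hK : 0 ≤ K) (u Δu : EuclideanSpace ℝ (Fin 3) → ℝ) (hu : ContDiff ℝ (⊤ : ℕ∞) u)
    -- Δu is the (weak) Laplacian of u on Ω
    (hlap : ∀ φ, TestFun Ω φ →
      ∫ x in Ω, ⟪gradient u x, gradient φ x⟫ = -∫ x in Ω, Δu x * φ x)
    (hKbd : ∀ x ∈ Ω, |Δu x| ≤ K)
    -- Poincaré inequality with constant d/√2, valid since Ω has width d
    (hPoin : ∀ φ, TestFun Ω φ →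
      ∫ x in Ω, (φ x) ^ 2 ≤ (d ^ 2 / 2) * ∫ x in Ω, ‖gradient φ x‖ ^ 2) :
    (∀ σ, TestFun Ω σ →
      (dn - (cn / 2) * (d ^ 2 / 2) * K) * ∫ x in Ω, ‖gradient σ x‖ ^ 2 ≤
        ∫ x in Ω, (dn * ‖gradient σ x‖ ^ 2 - cn * σ x * ⟪gradient u x, gradient σ x⟫)) ∧
    (d ^ 2 < 4 * dn / (cn * K) → 0 < dn - (cn / 2) * (d ^ 2 / 2) * K) := by
  constructor
  · rintro σ ⟨hσc, hσs, hσΩ⟩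
    have hσd : Differentiable ℝ σ := hσc.differentiable (by simp)
    have hΩm : MeasurableSet Ω := hΩo.measurableSet
    -- basic continuity / compact support facts
    have hgσc : Continuous (gradient σ) := grad_cont' σ hσc
    have hgσs : HasCompactSupport (gradient σ) := grad_cpt' σ hσs
    have hguc : Continuous (gradient u) := grad_cont' u hu
    -- the test function σ²
    have hφ : TestFun Ω (fun x => σ x ^ 2) := by
      refine ⟨hσc.pow 2, ?_, ?_⟩
      · exact hσs.comp_left (g := fun t : ℝ => t ^ 2) (by simp)
      · refine (closure_mono ?_).trans hσΩ
        intro x hx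
        simp only [Function.mem_support] at hx ⊢
        intro h0
        exact hx (by simp [h0])
    -- integrability facts
    have hint1 : IntegrableOn (fun x => ‖gradient σ x‖ ^ 2) Ω := by
      refine (Continuous.integrable_of_hasCompactSupport (by fun_prop) ?_).integrableOn
      exact (hgσs.comp_left (g := fun v => ‖v‖ ^ 2) (by simp))
    have hint2 : IntegrableOn (fun x => σ x * ⟪gradient u x, gradient σ x⟫) Ω := by
      refine (Continuous.integrable_of_hasCompactSupport ?_ ?_).integrableOn
      · exact hσc.continuous.mul (hguc.inner hgσc)
      · exact hσs.mul_right
    have hintsq : IntegrableOn (fun x => σ x ^ 2) Ω := by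
      refine (Continuous.integrable_of_hasCompactSupport (by fun_prop) ?_).integrableOn
      exact hσs.comp_left (g := fun t : ℝ => t ^ 2) (by simp)
    set G := ∫ x in Ω, ‖gradient σ x‖ ^ 2 with hG
    set S := ∫ x in Ω, σ x ^ 2 with hS
    set I := ∫ x in Ω, Δu x * σ x ^ 2 with hI
    have hG0 : 0 ≤ G := setIntegral_nonneg hΩm (fun x _ => by positivity)
    have hS0 : 0 ≤ S := setIntegral_nonneg hΩm (fun x _ => by positivity)
    have hSP : S ≤ d ^ 2 / 2 * G := hPoin σ ⟨hσc, hσs, hσΩ⟩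
    -- the integration-by-parts identity
    have hkey : ∫ x in Ω, σ x * ⟪gradient u x, gradient σ x⟫ = -(1 / 2) * I := by
      have h1 := hlap _ hφ
      have h2 : ∀ x, ⟪gradient u x, gradient (fun y => σ y ^ 2) x⟫
          = 2 * (σ x * ⟪gradient u x, gradient σ x⟫) := by
        intro x
        rw [gradient_sq' σ x (hσd x), real_inner_smul_right]
        ring
      rw [show (∫ x in Ω, ⟪gradient u x, gradient (fun y => σ y ^ 2) x⟫)
            = ∫ x in Ω, 2 * (σ x * ⟪gradient u x, gradient σ x⟫) from
          integral_congr_ae (Filter.Eventually.of_forall fun x => h2 x),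
        integral_const_mul] at h1
      linarith [h1]
    -- bound on I
    have hIbd : |I| ≤ K * S := by
      by_cases hInt : IntegrableOn (fun x => Δu x * σ x ^ 2) Ω
      · calc |I| ≤ ∫ x in Ω, |Δu x * σ x ^ 2| := by
              rw [hI]
              simpa only [Real.norm_eq_abs] using
                norm_integral_le_integral_norm (fun x => Δu x * σ x ^ 2)
                  (μ := volume.restrict Ω)
          _ ≤ ∫ x in Ω, K * σ x ^ 2 := by
              refine setIntegral_mono_on hInt.abs (hintsq.const_mul K) hΩm ?_
              intro x hx
              rw [abs_mul, abs_of_nonneg (by positivity : (0:ℝ) ≤ σ x ^ 2)]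
              exact mul_le_mul_of_nonneg_right (hKbd x hx) (by positivity)
          _ = K * S := by rw [integral_const_mul]
      · rw [hI, integral_undef hInt]
        simp [mul_nonneg hK hS0]
    -- split the target integral
    have hsplit : (∫ x in Ω, (dn * ‖gradient σ x‖ ^ 2
          - cn * σ x * ⟪gradient u x, gradient σ x⟫))
        = dn * G - cn * (∫ x in Ω, σ x * ⟪gradient u x, gradient σ x⟫) := by
      rw [show (fun x => dn * ‖gradient σ x‖ ^ 2
            - cn * σ x * ⟪gradient u x, gradient σ x⟫)
          = fun x => dn * ‖gradient σ x‖ ^ 2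
            - cn * (σ x * ⟪gradient u x, gradient σ x⟫) from by ext x; ring,
        integral_sub (hint1.const_mul dn) (hint2.const_mul cn),
        integral_const_mul, integral_const_mul]
    rw [hsplit, hkey]
    have habs := abs_le.mp hIbd
    nlinarith [habs.1, habs.2, mul_le_mul_of_nonneg_left hSP hK, hcn.le]
  · intro h
    rcases eq_or_lt_of_le hK with hK0 | hKpos
    · rw [← hK0]; simpa using hdn
    · have hck : 0 < cn * K := mul_pos hcn hKpos
      rw [lt_div_iff₀ hck] at h
      nlinarith
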